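/- For α > 2, the quantity (1/2)·ζ(α−1)/ζ(α) + 1 is strictly decreasing in α on (2, ∞). -/
import Mathlib


/-- Real Riemann zeta function as `ζ(s) = Σ_{d ≥ 1} d^{-s}` (convergent for `s > 1`). -/
noncomputable def zetaR (s : ℝ) : ℝ := ∑' d : ℕ+, ((d : ℝ) ^ s)⁻¹

private lemma summable_w {s : ℝ} (hs : 1 < s) :
    Summable (fun d : ℕ+ => ((d : ℝ) ^ s)⁻¹) := by
  have h : Summable (fun n : ℕ => ((n : ℝ) ^ s)⁻¹) :=
    Real.summable_nat_rpow_inv.2 hs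
  exact h.comp_injective (fun a b hab => PNat.coe_injective hab)

private lemma w_nonneg (s : ℝ) (d : ℕ+) : 0 ≤ ((d : ℝ) ^ s)⁻¹ := by positivity

private lemma w_pos (s : ℝ) (d : ℕ+) : 0 < ((d : ℝ) ^ s)⁻¹ := by
  have hd : (0:ℝ) < (d:ℝ) := by exact_mod_cast d.pos
  positivity

private lemma zetaR_pos {s : ℝ} (hs : 1 < s) : 0 < zetaR s :=
  Summable.tsum_pos (summable_w hs) (fun d => w_nonneg s d) 1 (w_pos s 1)

private lemma w_sub_one (d : ℕ+) (s : ℝ) :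
    ((d : ℝ) ^ (s - 1))⁻¹ = (d : ℝ) * ((d : ℝ) ^ s)⁻¹ := by
  have hd : (0:ℝ) < (d:ℝ) := by exact_mod_cast d.pos
  rw [Real.rpow_sub hd, Real.rpow_one, div_eq_mul_inv, mul_inv, inv_inv, mul_comm]

private lemma cross {a b x y : ℝ} (hab : a ≤ b) (hy : 0 < y) (hxy : y ≤ x) :
    (y ^ a)⁻¹ * (x ^ b)⁻¹ ≤ (x ^ a)⁻¹ * (y ^ b)⁻¹ := by
  have hx : 0 < x := lt_of_lt_of_le hy hxy
  rw [← mul_inv, ← mul_inv]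
  have hxa := Real.rpow_pos_of_pos hx a
  have hya := Real.rpow_pos_of_pos hy a
  have hxb := Real.rpow_pos_of_pos hx (b - a)
  have hyb := Real.rpow_pos_of_pos hy (b - a)
  apply inv_anti₀ (by positivity)
  have h1 : y ^ (b - a) ≤ x ^ (b - a) := Real.rpow_le_rpow hy.le hxy (by linarith)
  have hx2 : x ^ b = x ^ a * x ^ (b - a) := by
    rw [← Real.rpow_add hx]; ring_nf
  have hy2 : y ^ b = y ^ a * y ^ (b - a) := by
    rw [← Real.rpow_add hy]; ring_nf
  rw [hx2, hy2]
  have h2 := mul_le_mul_of_nonneg_left h1 (le_of_lt (mul_pos hxa hya))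
  nlinarith [h2]

private noncomputable def Pfun (a b : ℝ) (p : ℕ+ × ℕ+) : ℝ :=
  ((p.1 : ℝ) - (p.2 : ℝ)) * (((p.1 : ℝ)) ^ a)⁻¹ * (((p.2 : ℝ)) ^ b)⁻¹

set_option maxHeartbeats 1000000 in
private lemma key {a b : ℝ} (ha : 2 < a) (hab : a < b) :
    zetaR (b - 1) * zetaR a < zetaR (a - 1) * zetaR b := by
  have ha1 : 1 < a - 1 := by linarith
  have hb1 : 1 < b - 1 := by linarith
  have ha' : (1:ℝ) < a := by linarith
  have hb' : (1:ℝ) < b := by linarith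
  have Sa := summable_w ha'
  have Sb := summable_w hb'
  have Sa1 := summable_w ha1
  have Sb1 := summable_w hb1
  have H1 : Summable (fun p : ℕ+ × ℕ+ => ((p.1 : ℝ) ^ (a-1))⁻¹ * ((p.2 : ℝ) ^ b)⁻¹) :=
    Sa1.mul_of_nonneg Sb (fun d => w_nonneg _ d) (fun d => w_nonneg _ d)
  have H3 : Summable (fun p : ℕ+ × ℕ+ => ((p.1 : ℝ) ^ a)⁻¹ * ((p.2 : ℝ) ^ (b-1))⁻¹) :=
    Sa.mul_of_nonneg Sb1 (fun d => w_nonneg _ d) (fun d => w_nonneg _ d)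
  have hPab : ∀ p : ℕ+ × ℕ+, Pfun a b p =
      ((p.1 : ℝ) ^ (a-1))⁻¹ * ((p.2 : ℝ) ^ b)⁻¹ - ((p.1 : ℝ) ^ a)⁻¹ * ((p.2 : ℝ) ^ (b-1))⁻¹ := by
    rintro ⟨d, e⟩
    simp only [Pfun]
    rw [w_sub_one d a, w_sub_one e b]
    ring
  have SPab : Summable (Pfun a b) := (H1.sub H3).congr (fun p => (hPab p).symm)
  have eA : zetaR (a-1) * zetaR b = ∑' p : ℕ+ × ℕ+, ((p.1 : ℝ) ^ (a-1))⁻¹ * ((p.2 : ℝ) ^ b)⁻¹ :=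
    Summable.tsum_mul_tsum Sa1 Sb H1
  have eB : zetaR a * zetaR (b-1) = ∑' p : ℕ+ × ℕ+, ((p.1 : ℝ) ^ a)⁻¹ * ((p.2 : ℝ) ^ (b-1))⁻¹ :=
    Summable.tsum_mul_tsum Sa Sb1 H3
  have eP : ∑' p, Pfun a b p = zetaR (a-1) * zetaR b - zetaR a * zetaR (b-1) := by
    rw [eA, eB, ← Summable.tsum_sub H1 H3]
    exact tsum_congr hPab
  -- the swapped partner
  have SQ : Summable (fun p : ℕ+ × ℕ+ => Pfun a b p.swap) :=
    ((Equiv.prodComm ℕ+ ℕ+).summable_iff.2 SPab).congr (fun p => rfl)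
  have eQ : ∑' p : ℕ+ × ℕ+, Pfun a b p.swap = ∑' p, Pfun a b p :=
    (Equiv.prodComm ℕ+ ℕ+).tsum_eq (Pfun a b)
  -- nonnegativity of the symmetrized term
  have hnn : ∀ p : ℕ+ × ℕ+, 0 ≤ Pfun a b p + Pfun a b p.swap := by
    rintro ⟨d, e⟩
    have hd : (0:ℝ) < (d:ℝ) := by exact_mod_cast d.pos
    have he : (0:ℝ) < (e:ℝ) := by exact_mod_cast e.pos
    simp only [Pfun, Prod.swap_prod_mk]
    rcases le_total (e:ℝ) (d:ℝ) with h | h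
    · have hc := cross hab.le he h
      nlinarith [hc, sub_nonneg.2 h]
    · have hc := cross hab.le hd h
      nlinarith [hc, sub_nonneg.2 h]
  -- positivity at (2,1)
  have hpt : 0 < Pfun a b ((2:ℕ+), (1:ℕ+)) + Pfun a b (((2:ℕ+), (1:ℕ+)) : ℕ+ × ℕ+).swap := by
    have c2 : (((2:ℕ+) : ℝ)) = 2 := by norm_cast
    have c1 : (((1:ℕ+) : ℝ)) = 1 := by norm_cast
    simp only [Pfun, Prod.swap_prod_mk, c1, c2, Real.one_rpow, inv_one, mul_one, one_mul]
    have hlt : (2:ℝ) ^ a < (2:ℝ) ^ b :=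
      Real.rpow_lt_rpow_left_iff (by norm_num : (1:ℝ) < 2) |>.2 hab
    have h2a : (0:ℝ) < (2:ℝ) ^ a := Real.rpow_pos_of_pos (by norm_num) a
    have h2b : (0:ℝ) < (2:ℝ) ^ b := Real.rpow_pos_of_pos (by norm_num) b
    have hinv := inv_strictAnti₀ h2a hlt
    nlinarith [hinv, inv_pos.2 h2a, inv_pos.2 h2b]
  have hsumpos : 0 < ∑' p : ℕ+ × ℕ+, (Pfun a b p + Pfun a b p.swap) :=
    Summable.tsum_pos (SPab.add SQ) hnn ((2:ℕ+), (1:ℕ+)) hpt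
  have hsum : ∑' p : ℕ+ × ℕ+, (Pfun a b p + Pfun a b p.swap)
      = ∑' p, Pfun a b p + ∑' p : ℕ+ × ℕ+, Pfun a b p.swap := Summable.tsum_add SPab SQ
  have hPpos : 0 < ∑' p, Pfun a b p := by
    rw [hsum, eQ] at hsumpos
    linarith
  rw [eP] at hPpos
  linarith

/-- the Distributed NE expected upper bound `(1/2)·ζ(α-1)/ζ(α) + 1` for
power-law graphs is strictly decreasing in `α` on `(2, ∞)`. -/
theorem upper_bound_strictAnti :
    StrictAntiOn (fun α : ℝ => (1 / 2) * (zetaR (α - 1) / zetaR α) + 1) (Set.Ioi 2) := by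
  intro a ha b hb hab
  simp only [Set.mem_Ioi] at ha hb
  have hza : 0 < zetaR a := zetaR_pos (by linarith)
  have hzb : 0 < zetaR b := zetaR_pos (by linarith)
  have hkey := key ha hab
  have hdiv : zetaR (b-1) / zetaR b < zetaR (a-1) / zetaR a := by
    rw [div_lt_div_iff₀ hzb hza]; linarith
  simp only
  linarith
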